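/- Let λ be a Lyndon word with r = |λ|, and let F = run(λ,e,α,β) and F' = run(λ,e',α',β') with e, e' ≥ 2, 0 ≤ α, β, α', β' < r. If e > e', then F is not a substring of F'; that is, |Occ(F,F')| = 0. -/

import Mathlib

/-- `e`-fold concatenation of the string `l` with itself. -/
def listPow {α : Type*} (l : List α) : ℕ → List α
  | 0 => []
  | n + 1 => l ++ listPow l n

/-- `run λ e α β = P · λ^e · T` where `P` is the suffix of `λ` of length `α`
and `T` is the prefix of `λ` of length `β`. -/
def runWord {α : Type*} (lam : List α) (e a b : ℕ) : List α :=
  lam.drop (lam.length - a) ++ listPow lam e ++ lam.take b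

/-- The set of occurrences of `F` in `F'`: positions `i` with
`0 ≤ i ≤ |F'| − |F|` and `F = F'[i..i+|F|)`. -/
def occ {α : Type*} [DecidableEq α] (F F' : List α) : Finset ℕ :=
  (Finset.range (F'.length + 1)).filter
    (fun i => i + F.length ≤ F'.length ∧ (F'.drop i).take F.length = F)

/-- A Lyndon word: a nonempty string lexicographically strictly smaller than
every proper nonempty suffix of itself. -/
def IsLyndon {α : Type*} [LinearOrder α] (l : List α) : Prop :=
  l ≠ [] ∧ ∀ i, 0 < i → i < l.length → l < l.drop i

theorem listPow_length {α : Type*} (l : List α) (n : ℕ) :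
    (listPow l n).length = n * l.length := by
  induction n with
  | zero => simp [listPow]
  | succ n ih => simp [listPow, ih, Nat.succ_mul]; ring

theorem listPow_succ' {α : Type*} (l : List α) (n : ℕ) :
    listPow l (n + 1) = listPow l n ++ l := by
  induction n with
  | zero => simp [listPow]
  | succ n ih =>
    show l ++ listPow l (n + 1) = (l ++ listPow l n) ++ l
    rw [ih, List.append_assoc]

theorem listPow_getElem? {α : Type*} (l : List α) (n k : ℕ) (h : k < n * l.length) :
    (listPow l n)[k]? = l[k % l.length]? := by
  induction n generalizing k with
  | zero => omega
  | succ n ih =>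
    show (l ++ listPow l n)[k]? = l[k % l.length]?
    by_cases hk : k < l.length
    · rw [List.getElem?_append_left hk, Nat.mod_eq_of_lt hk]
    · rw [List.getElem?_append_right (by omega),
        ih (k - l.length) (by rw [Nat.succ_mul] at h; omega),
        ← Nat.mod_eq_sub_mod (by omega)]

theorem le_append_self {α : Type*} [LinearOrder α] (u v : List α) : u ≤ u ++ v := by
  induction u with
  | nil => cases v with
    | nil => exact le_rfl
    | cons x v => exact le_of_lt List.Lex.nil
  | cons a u ih => exact List.cons_le_cons a ih

theorem run_substring_case_gt {α : Type*} [LinearOrder α]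
    (lam : List α) (hlyn : IsLyndon lam) (r : ℕ) (hr : r = lam.length)
    (e e' a b a' b' : ℕ) (he : 2 ≤ e) (he' : 2 ≤ e')
    (ha : a < r) (hb : b < r) (ha' : a' < r) (hb' : b' < r)
    (hcase : e' < e) :
    (occ (runWord lam e a b) (runWord lam e' a' b')).card = 0 := by
  rw [Finset.card_eq_zero, Finset.eq_empty_iff_forall_notMem]
  intro i hi
  simp only [occ, Finset.mem_filter, Finset.mem_range] at hi
  obtain ⟨-, hle, heqF⟩ := hi
  set F := runWord lam e a b with hF
  set F' := runWord lam e' a' b' with hF'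
  have hr0 : 0 < r := by omega
  have hrl : r = lam.length := hr
  -- lengths
  have hPlen : (lam.drop (lam.length - a)).length = a := by
    rw [List.length_drop]; omega
  have hP'len : (lam.drop (lam.length - a')).length = a' := by
    rw [List.length_drop]; omega
  have hFlen : F.length = a + e * r + b := by
    simp [hF, runWord, listPow_length, hPlen, ← hrl]; omega
  have hF'len : F'.length = a' + e' * r + b' := by
    simp [hF', runWord, listPow_length, hP'len, ← hrl]; omega
  -- e * r vs e' * r
  have hee : (e' + 1) * r ≤ e * r := Nat.mul_le_mul_right r (by omega)
  have hee1 : (e' + 1) * r = e' * r + r := by ring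
  have hee2 : (e' + 2) * r = e' * r + 2 * r := by ring
  -- W : the big power
  set W := listPow lam (e' + 2) with hWdef
  have hWlen : W.length = (e' + 2) * r := by rw [hWdef, listPow_length, ← hrl]
  have hW : W.drop (lam.length - a') = F' ++ lam.drop b' := by
    show (lam ++ listPow lam (e' + 1)).drop (lam.length - a') = F' ++ lam.drop b'
    rw [List.drop_append_of_le_length (by omega), listPow_succ']
    conv_lhs => rw [← List.take_append_drop b' lam]
    simp [hF', runWord, List.append_assoc]
  -- getElem? facts
  have hF'W : ∀ s, s < F'.length → F'[s]? = W[(lam.length - a') + s]? := by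
    intro s hs
    rw [← List.getElem?_drop, hW, List.getElem?_append_left hs]
  have hFlam : ∀ t, t < r → lam[t]? = F[a + t]? := by
    intro t ht
    have h1 : F = (lam.drop (lam.length - a) ++ listPow lam e) ++ lam.take b := by
      simp [hF, runWord, List.append_assoc]
    rw [h1, List.getElem?_append_left (by
      rw [List.length_append, hPlen, listPow_length, ← hrl]
      have : 1 * r ≤ e * r := Nat.mul_le_mul_right r (by omega)
      omega),
      List.getElem?_append_right (by omega), hPlen]
    have : a + t - a = t := by omega
    rw [this, listPow_getElem? lam e t (by
      rw [← hrl]; have : 1 * r ≤ e * r := Nat.mul_le_mul_right r (by omega); omega),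
      ← hrl, Nat.mod_eq_of_lt ht]
  have hFF' : ∀ t, t < F.length → F[t]? = F'[i + t]? := by
    intro t ht
    rw [← heqF, List.getElem?_take_of_lt ht, List.getElem?_drop]
  -- the key index
  set q := (lam.length - a') + i + a with hq
  have hqr : q + e * r + b ≤ r + e' * r + b' := by
    have := hle
    rw [hFlen, hF'len] at this
    omega
  have hkey : ∀ t, t < r → lam[t]? = lam[(q + t) % r]? := by
    intro t ht
    have hb1 : a + t < F.length := by rw [hFlen]; omega
    have hb2 : i + (a + t) < F'.length := by
      rw [hF'len]; rw [hFlen] at hle; omega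
    rw [hFlam t ht, hFF' _ hb1, hF'W _ hb2]
    have hidx : (lam.length - a') + (i + (a + t)) = q + t := by omega
    rw [hidx, hWdef, listPow_getElem? lam (e' + 2) (q + t) (by rw [← hrl]; omega), ← hrl]
  have hq0 : 0 < q := by omega
  set j := q % r with hj
  by_cases hj0 : j = 0
  · -- q is a positive multiple of r : length contradiction
    have hdvd : r ∣ q := Nat.dvd_of_mod_eq_zero hj0
    have : r ≤ q := Nat.le_of_dvd hq0 hdvd
    omega
  · -- rotation : lam.drop j ++ lam.take j = lam
    have hjr : j < r := Nat.mod_lt q hr0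
    have hjpos : 0 < j := by omega
    have hrot : lam.drop j ++ lam.take j = lam := by
      apply List.ext_getElem?
      intro t
      by_cases ht : t < r
      · have hqt : (q + t) % r = (j + t) % r := by
          rw [hj, Nat.mod_add_mod]
        have hlhs : (lam.drop j ++ lam.take j)[t]? = lam[(j + t) % r]? := by
          have hdl : (lam.drop j).length = r - j := by rw [List.length_drop, ← hrl]
          by_cases htj : t < r - j
          · rw [List.getElem?_append_left (by omega), List.getElem?_drop,
              Nat.mod_eq_of_lt (by omega)]
          · rw [List.getElem?_append_right (by omega), hdl,
              List.getElem?_take_of_lt (by omega)]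
            have : (j + t) % r = t - (r - j) := by
              rw [Nat.mod_eq_sub_mod (by omega), Nat.mod_eq_of_lt (by omega)]
              omega
            rw [this]
        rw [hlhs, ← hqt, ← hkey t ht]
      · have h1 : (lam.drop j ++ lam.take j).length = r := by
          rw [List.length_append, List.length_drop, List.length_take, ← hrl]
          omega
        rw [List.getElem?_eq_none (by omega), List.getElem?_eq_none (by omega)]
    -- contradiction with Lyndon property
    have hlt : lam < lam.drop j := hlyn.2 j hjpos (by omega)
    have hle2 : lam.drop j ≤ lam := by
      calc lam.drop j ≤ lam.drop j ++ lam.take j := le_append_self _ _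
        _ = lam := hrot
    exact absurd (lt_of_lt_of_le hlt hle2) (lt_irrefl lam)
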